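/- arXiv:gr-qc/0106085 — 4 statements merged into one kernel-verified Lean document; each statement's English description precedes it below -/
import Mathlib

section
/- Let P₀ be an n×n complex matrix and 𝐏 = [[0, P₀],[I, 0]] the associated 2n×2n companion matrix. Then 𝐏 is diagonalizable with real eigenvalues if and only if P₀ is diagonalizable with strictly positive real eigenvalues. -/
/-!
Write `x = (a, b)`, so that `companionBlock P₀ *ᵥ x = (P₀ b, a)`. Then `x` is an eigenvector for
`λ` iff `a = λ b` and `P₀ b = λ a`; hence `P₀ a = λ² a`, and `a = 0` when `λ = 0`. Conversely, if
`P₀ a = μ a` with `μ > 0`, then `(±√μ a, a)` are eigenvectors for `±√μ`, and their sum and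
difference give `(0, a)` and `(a, 0)`. Since a matrix is diagonalizable with real eigenvalues in a
given set exactly when its eigenvectors for those eigenvalues span, spanning transfers in both
directions.
-/

open Matrix

def companionBlock {n : ℕ} (P₀ : Matrix (Fin n) (Fin n) ℂ) :
    Matrix (Fin n ⊕ Fin n) (Fin n ⊕ Fin n) ℂ :=
  Matrix.fromBlocks 0 P₀ 1 0

/-- `M` is diagonalizable over ℂ with eigenvalues satisfying predicate `pred` on ℝ
    (all eigenvalues are real and satisfy `pred`). -/
def IsRealDiagonalizable {m : Type*} [Fintype m] [DecidableEq m]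
    (M : Matrix m m ℂ) (pred : ℝ → Prop) : Prop :=
  ∃ (S : Matrix m m ℂ) (d : m → ℝ), IsUnit S.det ∧ (∀ i, pred (d i)) ∧
    M = S * Matrix.diagonal (fun i => (d i : ℂ)) * S⁻¹

section RealEigenvectors

variable {m : Type*} [Fintype m] [DecidableEq m]

def realEigenvectors (M : Matrix m m ℂ) (pred : ℝ → Prop) : Set (m → ℂ) :=
  {v | ∃ μ : ℝ, pred μ ∧ M *ᵥ v = (μ : ℂ) • v}

theorem col_mem_realEigenvectors {M S : Matrix m m ℂ} {d : m → ℝ} {pred : ℝ → Prop}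
    (hS : IsUnit S.det) (hd : ∀ i, pred (d i))
    (hM : M = S * diagonal (fun i => (d i : ℂ)) * S⁻¹) (j : m) :
    S.col j ∈ realEigenvectors M pred := by
  refine ⟨d j, hd j, ?_⟩
  rw [hM, ← mulVec_single_one, mulVec_mulVec, mul_assoc, nonsing_inv_mul _ hS, mul_one,
    ← mulVec_mulVec, diagonal_mulVec_single]
  ext i
  simp [mulVec_single, mul_comm]

theorem isRealDiagonalizable_iff_span_realEigenvectors {M : Matrix m m ℂ} {pred : ℝ → Prop} :
    IsRealDiagonalizable M pred ↔ Submodule.span ℂ (realEigenvectors M pred) = ⊤ := by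
  constructor
  · rintro ⟨S, d, hS, hd, hM⟩
    have hsurj : Function.Surjective S.mulVecLin :=
      mulVec_surjective_iff_isUnit.2 ((isUnit_iff_isUnit_det S).2 hS)
    rw [eq_top_iff, ← LinearMap.range_eq_top.2 hsurj, range_mulVecLin]
    exact Submodule.span_mono (Set.range_subset_iff.2 (col_mem_realEigenvectors hS hd hM))
  · intro h
    let B := Module.Basis.ofSpan h.ge
    let c := B.reindex (B.indexEquiv (Pi.basisFun ℂ m))
    have hc (j : m) : c j ∈ realEigenvectors M pred := by
      rw [Module.Basis.reindex_apply]
      exact Module.Basis.ofSpan_subset h.ge ⟨_, rfl⟩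
    choose d hd hMc using hc
    let S : Matrix m m ℂ := (Matrix.of c)ᵀ
    have hS : IsUnit S.det := by
      rw [← isUnit_iff_isUnit_det, ← mulVec_injective_iff_isUnit, mulVec_injective_iff,
        col_transpose]
      exact c.linearIndependent
    have hMS : M * S = S * diagonal (fun i => (d i : ℂ)) := by
      ext i j
      simpa [S, mul_apply, mulVec, dotProduct, diagonal_apply, mul_comm] using congrFun (hMc j) i
    refine ⟨S, d, hS, hd, ?_⟩
    rw [← hMS, mul_nonsing_inv_cancel_right _ _ hS]

end RealEigenvectors

section Companion

variable {n : ℕ} (P₀ : Matrix (Fin n) (Fin n) ℂ)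

theorem companionBlock_mulVec (x : Fin n ⊕ Fin n → ℂ) :
    companionBlock P₀ *ᵥ x = Sum.elim (P₀ *ᵥ (x ∘ Sum.inr)) (x ∘ Sum.inl) := by
  simp [companionBlock, fromBlocks_mulVec]

theorem companionBlock_mulVec_eq_smul_iff (x : Fin n ⊕ Fin n → ℂ) (c : ℂ) :
    companionBlock P₀ *ᵥ x = c • x ↔
      P₀ *ᵥ (x ∘ Sum.inr) = c • (x ∘ Sum.inl) ∧ x ∘ Sum.inl = c • (x ∘ Sum.inr) := by
  simp only [companionBlock_mulVec, funext_iff, Sum.forall, Sum.elim_inl, Sum.elim_inr,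
    Function.comp_apply, Pi.smul_apply]

theorem companionBlock_mulVec_elim_smul {a : Fin n → ℂ} {c : ℂ} (ha : P₀ *ᵥ a = (c * c) • a) :
    companionBlock P₀ *ᵥ Sum.elim (c • a) a = c • Sum.elim (c • a) a := by
  rw [companionBlock_mulVec_eq_smul_iff]
  exact ⟨by simpa [mul_smul] using ha, rfl⟩

variable {P₀}

theorem comp_inl_mem_span_of_mem_realEigenvectors_companionBlock {x : Fin n ⊕ Fin n → ℂ}
    (hx : x ∈ realEigenvectors (companionBlock P₀) (fun _ => True)) :
    x ∘ Sum.inl ∈ Submodule.span ℂ (realEigenvectors P₀ (fun μ => 0 < μ)) := by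
  obtain ⟨μ, -, hμ⟩ := hx
  obtain ⟨hP, hinl⟩ := (companionBlock_mulVec_eq_smul_iff P₀ x μ).1 hμ
  rcases eq_or_ne μ 0 with rfl | hμ0
  · simp [hinl]
  refine Submodule.subset_span ⟨μ ^ 2, by positivity, ?_⟩
  conv_lhs => rw [hinl]
  rw [mulVec_smul, hP, smul_smul, Complex.ofReal_pow, sq]

theorem span_realEigenvectors_pos_eq_top_of_companionBlock
    (h : Submodule.span ℂ (realEigenvectors (companionBlock P₀) (fun _ => True)) = ⊤) :
    Submodule.span ℂ (realEigenvectors P₀ (fun μ => 0 < μ)) = ⊤ := by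
  have hπ := LinearMap.funLeft_surjective_of_injective ℂ ℂ _
    (Sum.inl_injective (α := Fin n) (β := Fin n))
  rw [eq_top_iff, ← LinearMap.range_eq_top.2 hπ, LinearMap.range_eq_map, ← h,
    Submodule.map_span_le]
  exact fun x hx => comp_inl_mem_span_of_mem_realEigenvectors_companionBlock hx

theorem elim_mem_span_realEigenvectors_companionBlock {a : Fin n → ℂ}
    (ha : a ∈ realEigenvectors P₀ (fun μ => 0 < μ)) :
    Sum.elim a (0 : Fin n → ℂ) ∈
        Submodule.span ℂ (realEigenvectors (companionBlock P₀) (fun _ => True)) ∧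
      Sum.elim (0 : Fin n → ℂ) a ∈
        Submodule.span ℂ (realEigenvectors (companionBlock P₀) (fun _ => True)) := by
  obtain ⟨μ, hμ, hPa⟩ := ha
  set s := Real.sqrt μ
  have hs : (s : ℂ) ≠ 0 := Complex.ofReal_ne_zero.2 (Real.sqrt_pos.2 hμ).ne'
  have hmem (t : ℝ) (ht : t * t = μ) :
      Sum.elim ((t : ℂ) • a) a ∈
        Submodule.span ℂ (realEigenvectors (companionBlock P₀) (fun _ => True)) := by
    refine Submodule.subset_span ⟨t, trivial, companionBlock_mulVec_elim_smul P₀ ?_⟩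
    rw [← Complex.ofReal_mul, ht, hPa]
  have hplus := hmem s (Real.mul_self_sqrt hμ.le)
  have hminus := hmem (-s) (by rw [neg_mul_neg, Real.mul_self_sqrt hμ.le])
  constructor
  · convert Submodule.smul_mem _ (2 * (s : ℂ))⁻¹ (Submodule.sub_mem _ hplus hminus) using 1
    ext (i | i) <;> simp; field_simp; ring
  · convert Submodule.smul_mem _ (2 : ℂ)⁻¹ (Submodule.add_mem _ hplus hminus) using 1
    ext (i | i) <;> simp; ring

theorem span_realEigenvectors_companionBlock_eq_top
    (h : Submodule.span ℂ (realEigenvectors P₀ (fun μ => 0 < μ)) = ⊤) :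
    Submodule.span ℂ (realEigenvectors (companionBlock P₀) (fun _ => True)) = ⊤ := by
  set W := Submodule.span ℂ (realEigenvectors (companionBlock P₀) (fun _ => True))
  let e := (LinearEquiv.sumArrowLequivProdArrow (Fin n) (Fin n) ℂ ℂ).symm
  have hinl : ⊤ ≤ W.comap (e.toLinearMap ∘ₗ LinearMap.inl ℂ _ _) := by
    rw [← h, Submodule.span_le]
    exact fun a ha => (elim_mem_span_realEigenvectors_companionBlock ha).1
  have hinr : ⊤ ≤ W.comap (e.toLinearMap ∘ₗ LinearMap.inr ℂ _ _) := by
    rw [← h, Submodule.span_le]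
    exact fun a ha => (elim_mem_span_realEigenvectors_companionBlock ha).2
  refine eq_top_iff.2 fun x _ => ?_
  rw [← e.apply_symm_apply x, ← Prod.fst_add_snd (e.symm x), map_add]
  exact W.add_mem (hinl Submodule.mem_top) (hinr Submodule.mem_top)

end Companion

theorem stmt6 {n : ℕ} (P₀ : Matrix (Fin n) (Fin n) ℂ) :
    IsRealDiagonalizable (companionBlock P₀) (fun _ => True) ↔
    IsRealDiagonalizable P₀ (fun x => 0 < x) := by
  rw [isRealDiagonalizable_iff_span_realEigenvectors,
    isRealDiagonalizable_iff_span_realEigenvectors]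
  exact ⟨span_realEigenvectors_pos_eq_top_of_companionBlock,
    span_realEigenvectors_companionBlock_eq_top⟩
end

section
/- Let P₀ be an n×n diagonalizable matrix with nonnegative real eigenvalues, at least one of which is zero. Then the companion matrix 𝐏 = [[0, P₀],[I, 0]] has all eigenvalues real, but 𝐏 is not diagonalizable (the eigenvalue 0 of 𝐏 has geometric multiplicity strictly less than its algebraic multiplicity). -/
open Matrix

private lemma eval_charpoly' {m : Type*} [Fintype m] [DecidableEq m]
    (M : Matrix m m ℂ) (z : ℂ) :
    M.charpoly.eval z = (Matrix.diagonal (fun _ => z) - M).det := by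
  rw [Matrix.charpoly, ← Polynomial.coe_evalRingHom, RingHom.map_det]
  congr 1
  ext i j
  by_cases h : i = j <;>
    simp [Matrix.charmatrix_apply, Matrix.diagonal_apply, h, Matrix.map_apply]

theorem stmt7 {n : ℕ} (P₀ S : Matrix (Fin n) (Fin n) ℂ) (d : Fin n → ℝ)
    (hS : IsUnit S.det)
    (hdiag : P₀ = S * Matrix.diagonal (fun i => (d i : ℂ)) * S⁻¹)
    (hnonneg : ∀ i, 0 ≤ d i) (hzero : ∃ i, d i = 0) :
    (∀ z : ℂ, (companionBlock P₀).charpoly.IsRoot z → z.im = 0) ∧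
    ¬ ∃ (T : Matrix (Fin n ⊕ Fin n) (Fin n ⊕ Fin n) ℂ) (e : Fin n ⊕ Fin n → ℂ),
        IsUnit T.det ∧ companionBlock P₀ = T * Matrix.diagonal e * T⁻¹ := by
  have hSS : S⁻¹ * S = 1 := Matrix.nonsing_inv_mul S hS
  have hSS' : S * S⁻¹ = 1 := Matrix.mul_nonsing_inv S hS
  constructor
  · intro z hz
    -- from root of charpoly get eigenvector
    have hdet : (Matrix.diagonal (fun _ => z) - companionBlock P₀).det = 0 := by
      rw [← eval_charpoly']; exact hz
    obtain ⟨v, hv, hveq⟩ := (Matrix.exists_mulVec_eq_zero_iff).2 hdet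
    have hPv : companionBlock P₀ *ᵥ v = z • v := by
      have := hveq
      rw [Matrix.sub_mulVec, sub_eq_zero] at this
      rw [← this]
      ext j
      simp [Matrix.mulVec_diagonal]
    set a : Fin n → ℂ := v ∘ Sum.inl with ha
    set b : Fin n → ℂ := v ∘ Sum.inr with hb
    have hvelim : v = Sum.elim a b := by
      funext j; cases j <;> rfl
    have hblocks : companionBlock P₀ *ᵥ v = Sum.elim (P₀ *ᵥ b) a := by
      rw [hvelim, companionBlock, Matrix.fromBlocks_mulVec]
      simp
    have h1 : P₀ *ᵥ b = z • a := by
      funext j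
      have := congrFun (hblocks.symm.trans hPv) (Sum.inl j)
      simpa [hvelim] using this
    have h2 : a = z • b := by
      funext j
      have := congrFun (hblocks.symm.trans hPv) (Sum.inr j)
      simpa [hvelim] using this
    have hPb : P₀ *ᵥ b = (z ^ 2) • b := by
      rw [h1, h2, smul_smul, sq]
    have hbne : b ≠ 0 := by
      intro hb0
      apply hv
      rw [hvelim, hb0, h2, hb0, smul_zero]
      simp
    -- pass to diagonal coordinates
    set w : Fin n → ℂ := S⁻¹ *ᵥ b with hw
    have hwb : S *ᵥ w = b := by
      rw [hw, Matrix.mulVec_mulVec, hSS', Matrix.one_mulVec]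
    have hwne : w ≠ 0 := by
      intro h0
      apply hbne
      rw [← hwb, h0, Matrix.mulVec_zero]
    have hDw : Matrix.diagonal (fun i => (d i : ℂ)) *ᵥ w = (z ^ 2) • w := by
      have h0 : S⁻¹ *ᵥ (P₀ *ᵥ b) = S⁻¹ *ᵥ ((z ^ 2) • b) := by rw [hPb]
      rw [Matrix.mulVec_smul, hdiag, Matrix.mulVec_mulVec] at h0
      have heq : S⁻¹ * (S * Matrix.diagonal (fun i => (d i : ℂ)) * S⁻¹) =
          Matrix.diagonal (fun i => (d i : ℂ)) * S⁻¹ := by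
        rw [← Matrix.mul_assoc S⁻¹ (S * Matrix.diagonal (fun i => (d i : ℂ))) S⁻¹,
          ← Matrix.mul_assoc S⁻¹ S (Matrix.diagonal (fun i => (d i : ℂ))), hSS, Matrix.one_mul]
      rw [heq, ← Matrix.mulVec_mulVec] at h0
      rw [hw]
      exact h0
    obtain ⟨i, hi⟩ : ∃ i, w i ≠ 0 := by
      by_contra h
      push_neg at h
      exact hwne (funext h)
    have hzi : (d i : ℂ) = z ^ 2 := by
      have := congrFun hDw i
      rw [Matrix.mulVec_diagonal] at this
      simp only [Pi.smul_apply, smul_eq_mul] at this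
      exact mul_right_cancel₀ hi this
    -- now z^2 is a nonnegative real, so z is real
    have him : (z ^ 2).im = 0 := by rw [← hzi]; simp
    have hre : 0 ≤ (z ^ 2).re := by rw [← hzi]; simpa using hnonneg i
    rw [sq, Complex.mul_im] at him
    rw [sq, Complex.mul_re] at hre
    have h4 : z.im ^ 4 ≤ 0 := by nlinarith [sq_nonneg z.im, sq_nonneg z.re]
    have h4' : z.im ^ 4 = 0 := le_antisymm h4 (by positivity)
    exact pow_eq_zero_iff (by norm_num) |>.1 h4'
  · rintro ⟨T, e, hT, hPe⟩
    obtain ⟨i, hi⟩ := hzero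
    have hTT : T⁻¹ * T = 1 := Matrix.nonsing_inv_mul T hT
    have hTT' : T * T⁻¹ = 1 := Matrix.mul_nonsing_inv T hT
    set y : Fin n → ℂ := S *ᵥ (Pi.single i 1 : Fin n → ℂ) with hy
    have hyne : y ≠ 0 := by
      intro h0
      have hps : (Pi.single i 1 : Fin n → ℂ) = 0 := by
        have : S⁻¹ *ᵥ y = S⁻¹ *ᵥ 0 := by rw [h0]
        rwa [hy, Matrix.mulVec_mulVec, hSS, Matrix.one_mulVec, Matrix.mulVec_zero] at this
      have := congrFun hps i
      simp at this
    have hP0y : P₀ *ᵥ y = 0 := by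
      rw [hdiag, hy, Matrix.mulVec_mulVec, Matrix.mul_assoc, Matrix.mul_assoc, hSS,
        Matrix.mul_one, ← Matrix.mulVec_mulVec]
      have : Matrix.diagonal (fun j => (d j : ℂ)) *ᵥ (Pi.single i 1 : Fin n → ℂ) = 0 := by
        funext j
        rw [Matrix.mulVec_diagonal]
        by_cases h : j = i
        · subst h; simp [hi]
        · simp [Pi.single_eq_of_ne h]
      rw [this, Matrix.mulVec_zero]
    set v : Fin n ⊕ Fin n → ℂ := Sum.elim y 0 with hv
    have hPv : companionBlock P₀ *ᵥ v = Sum.elim (0 : Fin n → ℂ) y := by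
      rw [hv, companionBlock, Matrix.fromBlocks_mulVec]
      simp
    have hPvne : companionBlock P₀ *ᵥ v ≠ 0 := by
      rw [hPv]
      intro h0
      exact hyne (funext fun j => congrFun h0 (Sum.inr j))
    have hP2v : companionBlock P₀ *ᵥ (companionBlock P₀ *ᵥ v) = 0 := by
      rw [hPv, companionBlock, Matrix.fromBlocks_mulVec]
      simp [hP0y]
    -- use the diagonalization to derive 𝐏 v = 0
    set u : Fin n ⊕ Fin n → ℂ := T⁻¹ *ᵥ v with hu
    have key : Matrix.diagonal e *ᵥ (Matrix.diagonal e *ᵥ u) = 0 := by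
      have hm : (T * Matrix.diagonal e * T⁻¹) * (T * Matrix.diagonal e * T⁻¹)
          = T * (Matrix.diagonal e * (Matrix.diagonal e * T⁻¹)) := by
        simp only [Matrix.mul_assoc]
        rw [← Matrix.mul_assoc T⁻¹ T, hTT, Matrix.one_mul]
      have h1 : companionBlock P₀ *ᵥ (companionBlock P₀ *ᵥ v)
          = T *ᵥ (Matrix.diagonal e *ᵥ (Matrix.diagonal e *ᵥ u)) := by
        rw [hPe, hu]
        simp only [Matrix.mulVec_mulVec]
        rw [hm]
      have h2 : T *ᵥ (Matrix.diagonal e *ᵥ (Matrix.diagonal e *ᵥ u)) = 0 := by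
        rw [← h1, hP2v]
      have := congrArg (fun x => T⁻¹ *ᵥ x) h2
      simpa [Matrix.mulVec_mulVec, ← Matrix.mul_assoc, hTT] using this
    have key2 : Matrix.diagonal e *ᵥ u = 0 := by
      funext j
      have := congrFun key j
      simp only [Matrix.mulVec_diagonal, Pi.zero_apply] at this ⊢
      rcases mul_eq_zero.1 this with h | h
      · rw [h, zero_mul]
      · exact h
    apply hPvne
    rw [hPe]
    simp only [← Matrix.mulVec_mulVec]
    rw [← hu, key2, Matrix.mulVec_zero]
end

section
/- If the characteristic equation det(−κ² I + κ P₁ + P₀) = 0 has a non-real root κ for some matrices P₁, P₀ (symbols at some frequency ω'), then the family of functions t ↦ e^{i|ω|κt} a, indexed by |ω| → ∞, grows faster than any fixed exponential in t; hence reality of all roots κ is necessary for a bound of the form ‖û(t)‖ ≤ K e^{αt}‖û(0)‖ uniform in ω. -/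
open Complex Filter

theorem Complex.max_norm_exp_norm_exp_neg (z : ℂ) :
    max ‖exp z‖ ‖exp (-z)‖ = Real.exp |z.re| := by
  rw [norm_exp, norm_exp, neg_re, abs_eq_max_neg, Real.exp_monotone.map_max]

theorem Complex.tendsto_max_norm_exp_I_mul_ofReal_mul {κ : ℂ} (him : κ.im ≠ 0) :
    Tendsto (fun R : ℝ => max ‖exp (I * R * κ)‖ ‖exp (-(I * R * κ))‖) atTop atTop := by
  have hre (R : ℝ) : |(I * R * κ).re| = |R| * |κ.im| := by
    simp [mul_re, abs_mul]
  simp only [max_norm_exp_norm_exp_neg, hre]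
  exact Real.tendsto_exp_atTop.comp
    (tendsto_abs_atTop_atTop.atTop_mul_const (abs_pos.mpr him))

theorem stmt8_general (κ : ℂ)
    (him : κ.im ≠ 0) :
    (∀ K α : ℝ, ∃ R : ℝ, 0 < R ∧ ∃ t : ℝ, 0 < t ∧
      K * Real.exp (α * t) <
        max (‖Complex.exp (Complex.I * R * κ * t)‖)
            (‖Complex.exp (-(Complex.I * R * κ * t))‖)) ∧
    ¬ ∃ K α : ℝ, ∀ R : ℝ, 0 < R → ∀ t : ℝ, 0 < t →
        max (‖Complex.exp (Complex.I * R * κ * t)‖)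
            (‖Complex.exp (-(Complex.I * R * κ * t))‖) ≤
          K * Real.exp (α * t) := by
  have grows : ∀ K α : ℝ, ∃ R : ℝ, 0 < R ∧ ∃ t : ℝ, 0 < t ∧
      K * Real.exp (α * t) <
        max (‖Complex.exp (Complex.I * R * κ * t)‖)
            (‖Complex.exp (-(Complex.I * R * κ * t))‖) := by
    intro K α
    obtain ⟨R, hK, hR⟩ :=
      (((tendsto_max_norm_exp_I_mul_ofReal_mul him).eventually_gt_atTop
        (K * Real.exp α)).and (eventually_gt_atTop 0)).exists
    exact ⟨R, hR, 1, one_pos, by simpa using hK⟩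
  refine ⟨grows, fun ⟨K, α, bounded⟩ => ?_⟩
  obtain ⟨R, hR, t, ht, hlt⟩ := grows K α
  exact (bounded R hR t ht).not_gt hlt

theorem stmt8 {n : ℕ} (P₀ P₁ : Matrix (Fin n) (Fin n) ℂ) (κ : ℂ)
    (hroot : Matrix.det (-(κ ^ 2) • (1 : Matrix (Fin n) (Fin n) ℂ) + κ • P₁ + P₀) = 0)
    (him : κ.im ≠ 0) :
    (∀ K α : ℝ, ∃ R : ℝ, 0 < R ∧ ∃ t : ℝ, 0 < t ∧
      K * Real.exp (α * t) <
        max (‖Complex.exp (Complex.I * R * κ * t)‖)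
            (‖Complex.exp (-(Complex.I * R * κ * t))‖)) ∧
    ¬ ∃ K α : ℝ, ∀ R : ℝ, 0 < R → ∀ t : ℝ, 0 < t →
        max (‖Complex.exp (Complex.I * R * κ * t)‖)
            (‖Complex.exp (-(Complex.I * R * κ * t))‖) ≤
          K * Real.exp (α * t) :=
  stmt8_general κ him
end

section
/- For every unit vector ω' ∈ ℝ³ and every k ≠ 0, the 6×6 symbol P₀(ω') of the system ∂_t²h_{ij} = k²(Δh_{ij} − (1/3)∂_i∂_jH), given by (P₀h)_{ij} = k²(h_{ij} − (1/3)ω'_iω'_jH) with H = tr h, is diagonalizable with eigenvalues k² (multiplicity 5) and (2/3)k² (multiplicity 1), all strictly positive. -/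
open Matrix

def omegaProd (w : Fin 3 → ℝ) : Fin 6 → ℝ :=
  ![w 0 ^ 2, w 1 ^ 2, w 2 ^ 2, w 0 * w 1, w 0 * w 2, w 1 * w 2]

def traceCoeff : Fin 6 → ℝ := ![1, 1, 1, 0, 0, 0]

/-- The 6×6 symbol of ∂ₜ²h_{ij} = k²(Δh_{ij} − (1/3)∂_i∂_jH) at unit frequency w:
(P₀h)_{ij} = k²(h_{ij} − (1/3)w_iw_j H). -/
noncomputable def admSymbol2 (k : ℝ) (w : Fin 3 → ℝ) : Matrix (Fin 6) (Fin 6) ℝ :=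
  k ^ 2 • (1 - Matrix.of (fun i j => (1 / 3) * omegaProd w i * traceCoeff j))

theorem stmt12 (k : ℝ) (hk : k ≠ 0) (w : Fin 3 → ℝ)
    (hw : w 0 ^ 2 + w 1 ^ 2 + w 2 ^ 2 = 1) :
    (∃ S : Matrix (Fin 6) (Fin 6) ℝ, IsUnit S.det ∧
      admSymbol2 k w =
        S * Matrix.diagonal ![k ^ 2, k ^ 2, k ^ 2, k ^ 2, k ^ 2, (2 / 3) * k ^ 2] * S⁻¹) ∧
    0 < k ^ 2 ∧ 0 < (2 / 3) * k ^ 2 := by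
  have hk2 : 0 < k ^ 2 := by positivity
  set S : Matrix (Fin 6) (Fin 6) ℝ :=
    !![1, 0, 0, 0, 0, w 0 ^ 2;
       -1, 1, 0, 0, 0, w 1 ^ 2;
       0, -1, 0, 0, 0, w 2 ^ 2;
       0, 0, 1, 0, 0, w 0 * w 1;
       0, 0, 0, 1, 0, w 0 * w 2;
       0, 0, 0, 0, 1, w 1 * w 2] with hS
  set T : Matrix (Fin 6) (Fin 6) ℝ :=
    !![1 - w 0 ^ 2, -(w 0 ^ 2), -(w 0 ^ 2), 0, 0, 0;
       w 2 ^ 2, w 2 ^ 2, w 2 ^ 2 - 1, 0, 0, 0;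
       -(w 0 * w 1), -(w 0 * w 1), -(w 0 * w 1), 1, 0, 0;
       -(w 0 * w 2), -(w 0 * w 2), -(w 0 * w 2), 0, 1, 0;
       -(w 1 * w 2), -(w 1 * w 2), -(w 1 * w 2), 0, 0, 1;
       1, 1, 1, 0, 0, 0] with hT
  have hST : S * T = 1 := by
    rw [hS, hT, ← Matrix.ext_iff]
    simp only [Fin.forall_fin_succ, IsEmpty.forall_iff, Matrix.mul_apply,
      Fin.sum_univ_succ, Finset.sum_empty, Fin.sum_univ_zero, Matrix.one_apply,
      Matrix.cons_val_zero, Matrix.cons_val_succ, Matrix.of_apply,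
      Fin.ext_iff, Fin.val_succ, Fin.val_zero, Fin.val_one]
    norm_num
    repeat' apply And.intro
    all_goals linarith
  have hSinv : S⁻¹ = T := Matrix.inv_eq_right_inv hST
  refine ⟨⟨S, Matrix.isUnit_det_of_right_inverse hST, ?_⟩, hk2, by positivity⟩
  rw [hSinv, hS, hT, ← Matrix.ext_iff]
  simp only [admSymbol2, omegaProd, traceCoeff, Matrix.smul_apply, Matrix.sub_apply,
    Matrix.one_apply, Matrix.of_apply, Matrix.diagonal_apply, smul_eq_mul,
    Fin.forall_fin_succ, IsEmpty.forall_iff, Matrix.mul_apply,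
    Fin.sum_univ_succ, Finset.sum_empty, Fin.sum_univ_zero,
    Matrix.cons_val_zero, Matrix.cons_val_succ,
    Fin.ext_iff, Fin.val_succ, Fin.val_zero, Fin.val_one]
  norm_num
  repeat' apply And.intro
  all_goals try ring
  all_goals linear_combination (-(k ^ 2)) * hw
end
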